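/- arXiv:2110.08877 — 6 statements merged into one kernel-verified Lean document; each statement's English description precedes it below -/
import Mathlib

section
/- The Nil rotation through angle ω about the z-axis at the origin, r_ω(x,y,z) = (x̄, ȳ, z̄) with x̄ = x·cos ω − y·sin ω, ȳ = x·sin ω + y·cos ω, z̄ = z − (1/2)xy + (1/4)(x² − y²)·sin 2ω + (1/2)xy·cos 2ω, preserves the Nil arc-length square: for every point (x,y,z) ∈ ℝ³ and every tangent vector (u,v,s) ∈ ℝ³, setting ū = u·cos ω − v·sin ω, v̄ = u·sin ω + v·cos ω, and s̄ = s + u·(−y/2 + (x/2)·sin 2ω + (y/2)·cos 2ω) + v·(−x/2 − (y/2)·sin 2ω + (x/2)·cos 2ω) (the image of (u,v,s) under the differential of r_ω at (x,y,z)), one has ū² + (1+x̄²)·v̄² − 2x̄·v̄·s̄ + s̄² = u² + (1+x²)·v² − 2x·v·s + s². -/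
open Real

/-!
The Nil arc-length square is a sum of three squares,
`Q_{(x,y,z)}(u,v,s) = u² + v² + (s − x·v)²`, the squared values of the left-invariant coframe
`dx, dy, dz − x dy` on `(u,v,s)`. The Nil rotation acts on the first two components by the
Euclidean rotation through `ω`, and it preserves the third one: `s̄ − x̄·v̄ = s − x·v`.
-/

theorem rotate_sq_add_rotate_sq (ω u v : ℝ) :
    (u * cos ω - v * sin ω) ^ 2 + (u * sin ω + v * cos ω) ^ 2 = u ^ 2 + v ^ 2 := by
  linear_combination (u ^ 2 + v ^ 2) * sin_sq_add_cos_sq ω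

theorem nil_rotation_sub_mul_eq (ω x y u v s : ℝ) :
    (s + u * (-y / 2 + x / 2 * sin (2 * ω) + y / 2 * cos (2 * ω)) +
        v * (-x / 2 - y / 2 * sin (2 * ω) + x / 2 * cos (2 * ω))) -
      (x * cos ω - y * sin ω) * (u * sin ω + v * cos ω) = s - x * v := by
  rw [sin_two_mul, cos_two_mul']
  linear_combination (u * y / 2 - v * x / 2) * sin_sq_add_cos_sq ω

theorem nil_rotation_preserves_metric_general (ω x y u v s : ℝ)
    (xb ub vb sb : ℝ)
    (hxb : xb = x * cos ω - y * sin ω)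
    (hub : ub = u * cos ω - v * sin ω)
    (hvb : vb = u * sin ω + v * cos ω)
    (hsb : sb = s + u * (-y / 2 + x / 2 * sin (2 * ω) + y / 2 * cos (2 * ω)) +
        v * (-x / 2 - y / 2 * sin (2 * ω) + x / 2 * cos (2 * ω))) :
    ub ^ 2 + (1 + xb ^ 2) * vb ^ 2 - 2 * xb * vb * sb + sb ^ 2 =
      u ^ 2 + (1 + x ^ 2) * v ^ 2 - 2 * x * v * s + s ^ 2 := by
  have hrotate : ub ^ 2 + vb ^ 2 = u ^ 2 + v ^ 2 := by
    rw [hub, hvb]; exact rotate_sq_add_rotate_sq ω u v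
  have hcontact : sb - xb * vb = s - x * v := by
    rw [hsb, hxb, hvb]; exact nil_rotation_sub_mul_eq ω x y u v s
  linear_combination hrotate + (sb - xb * vb + (s - x * v)) * hcontact

/-- **The Nil rotation about the z-axis preserves the Nil arc-length square.**
For every point `(x,y,z)` and tangent vector `(u,v,s)`, with
`x̄ = x·cos ω − y·sin ω`, `ū = u·cos ω − v·sin ω`, `v̄ = u·sin ω + v·cos ω`, and
`s̄ = s + u·(−y/2 + (x/2)·sin 2ω + (y/2)·cos 2ω) + v·(−x/2 − (y/2)·sin 2ω + (x/2)·cos 2ω)`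
(the image of `(u,v,s)` under the differential of the Nil rotation `r_ω` at `(x,y,z)`),
one has `Q_{(x̄,ȳ,z̄)}(ū,v̄,s̄) = Q_{(x,y,z)}(u,v,s)`. -/
theorem nil_rotation_preserves_metric (ω x y z u v s : ℝ)
    (xb ub vb sb : ℝ)
    (hxb : xb = x * cos ω - y * sin ω)
    (hub : ub = u * cos ω - v * sin ω)
    (hvb : vb = u * sin ω + v * cos ω)
    (hsb : sb = s + u * (-y / 2 + x / 2 * sin (2 * ω) + y / 2 * cos (2 * ω)) +
        v * (-x / 2 - y / 2 * sin (2 * ω) + x / 2 * cos (2 * ω))) :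
    ub ^ 2 + (1 + xb ^ 2) * vb ^ 2 - 2 * xb * vb * sb + sb ^ 2 =
      u ^ 2 + (1 + x ^ 2) * v ^ 2 - 2 * x * v * s + s ^ 2 :=
  nil_rotation_preserves_metric_general ω x y u v s xb ub vb sb hxb hub hvb hsb
end

section
/- The quadratic mapping M(x,y,z) = (x, y, z − (1/2)xy) conjugates the Nil rotation r_ω to the Euclidean rotation about the z-axis: for every ω ∈ ℝ and every (x,y,z) ∈ ℝ³, M(r_ω(x,y,z)) = R_ω(M(x,y,z)), where r_ω(x,y,z) = (x·cos ω − y·sin ω, x·sin ω + y·cos ω, z − (1/2)xy + (1/4)(x² − y²)·sin 2ω + (1/2)xy·cos 2ω) and R_ω(x,y,z) = (x·cos ω − y·sin ω, x·sin ω + y·cos ω, z). -/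
open Real

/-- The quadratic mapping `M(x,y,z) = (x, y, z − (1/2)xy)`. -/
noncomputable def quadMap (p : ℝ × ℝ × ℝ) : ℝ × ℝ × ℝ :=
  (p.1, p.2.1, p.2.2 - p.1 * p.2.1 / 2)

/-- The Nil rotation through angle `ω` about the z-axis at the origin. -/
noncomputable def nilRotation (ω : ℝ) (p : ℝ × ℝ × ℝ) : ℝ × ℝ × ℝ :=
  (p.1 * cos ω - p.2.1 * sin ω,
   p.1 * sin ω + p.2.1 * cos ω,
   p.2.2 - p.1 * p.2.1 / 2 + (p.1 ^ 2 - p.2.1 ^ 2) / 4 * sin (2 * ω) +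
     p.1 * p.2.1 / 2 * cos (2 * ω))

/-- The Euclidean rotation of ℝ³ through angle `ω` about the z-axis. -/
noncomputable def eucRotation (ω : ℝ) (p : ℝ × ℝ × ℝ) : ℝ × ℝ × ℝ :=
  (p.1 * cos ω - p.2.1 * sin ω, p.1 * sin ω + p.2.1 * cos ω, p.2.2)

/-- Half of the right-hand side is the `z`-shear of `nilRotation`, so subtracting `xy/2`
after rotating, as `quadMap` does, cancels it. -/
theorem rotate_mul_rotate (ω x y : ℝ) :
    (x * cos ω - y * sin ω) * (x * sin ω + y * cos ω) =
      (x ^ 2 - y ^ 2) / 2 * sin (2 * ω) + x * y * cos (2 * ω) := by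
  rw [sin_two_mul, cos_two_mul]
  linear_combination -(x * y) * sin_sq_add_cos_sq ω

/-- **The quadratic mapping `M` conjugates the Nil rotation to the Euclidean rotation:**
for every `ω` and every point `(x,y,z)`, `M(r_ω(x,y,z)) = R_ω(M(x,y,z))`. -/
theorem quadMap_conjugates_nilRotation (ω x y z : ℝ) :
    quadMap (nilRotation ω (x, y, z)) = eucRotation ω (quadMap (x, y, z)) := by
  have hxy := rotate_mul_rotate ω x y
  simp only [quadMap, nilRotation, eucRotation, Prod.mk.injEq]
  exact ⟨trivial, trivial, by linarith⟩
end

section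
/- The helix-like Nil geodesic has unit speed: let θ ∈ (−π/2, π/2) with w = sin θ ≠ 0, c = cos θ, and α ∈ ℝ, and define x(t) = (2c/w)·sin(wt/2)·cos(wt/2 + α), y(t) = (2c/w)·sin(wt/2)·sin(wt/2 + α), z(t) = wt + c²t/(2w) − (c²/(4w²))·(sin(2wt + 2α) − sin 2α) − (c²·sin α/w²)·(cos α − cos(wt + α)). Then for every t ∈ ℝ, x'(t)² + (1 + x(t)²)·y'(t)² − 2·x(t)·y'(t)·z'(t) + z'(t)² = 1. -/
/-! Writing `x(t)`, `y(t)` through the product-to-sum formulas shows that `(x, y)` runs with speed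
`c` around a circle of radius `c / w`, and `z` is built so that `z' = w + x y'`. The Nil form is
`u² + v² + (s - x v)²`, so the squared speed is `c² + w² = cos² θ + sin² θ = 1`. -/

open Real

lemma nil_form_eq_add_sq (x u v s : ℝ) :
    u ^ 2 + (1 + x ^ 2) * v ^ 2 - 2 * x * v * s + s ^ 2 = u ^ 2 + v ^ 2 + (s - x * v) ^ 2 := by
  ring

namespace NilHelix

lemma hasDerivAt_mul_add (a b t : ℝ) : HasDerivAt (fun t ↦ a * t + b) a t := by
  simpa using ((hasDerivAt_id t).const_mul a).add_const b

lemma two_mul_sin_mul_cos_eq (α w t : ℝ) :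
    2 * sin (w * t / 2) * cos (w * t / 2 + α) = sin (w * t + α) - sin α := by
  rw [sin_sub_sin]
  ring_nf

lemma two_mul_sin_mul_sin_eq (α w t : ℝ) :
    2 * sin (w * t / 2) * sin (w * t / 2 + α) = cos α - cos (w * t + α) := by
  rw [cos_sub_cos, show (α - (w * t + α)) / 2 = -(w * t / 2) by ring, sin_neg]
  ring_nf

lemma hasDerivAt_circle_fst {c w : ℝ} (α : ℝ) (hw : w ≠ 0) (t : ℝ) :
    HasDerivAt (fun t ↦ c / w * (sin (w * t + α) - sin α)) (c * cos (w * t + α)) t :=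
  (((hasDerivAt_mul_add w α t).sin.sub_const (sin α)).const_mul (c / w)).congr_deriv
    (by field_simp)

lemma hasDerivAt_circle_snd {c w : ℝ} (α : ℝ) (hw : w ≠ 0) (t : ℝ) :
    HasDerivAt (fun t ↦ c / w * (cos α - cos (w * t + α))) (c * sin (w * t + α)) t :=
  (((hasDerivAt_mul_add w α t).cos.const_sub (cos α)).const_mul (c / w)).congr_deriv
    (by field_simp)

lemma hasDerivAt_height {c w : ℝ} (α : ℝ) (hw : w ≠ 0) (t : ℝ) :
    HasDerivAt (fun t ↦ w * t + c ^ 2 * t / (2 * w)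
        - c ^ 2 / (4 * w ^ 2) * (sin (2 * w * t + 2 * α) - sin (2 * α))
        - c ^ 2 * sin α / w ^ 2 * (cos α - cos (w * t + α)))
      (w + c / w * (sin (w * t + α) - sin α) * (c * sin (w * t + α))) t := by
  have h := ((((hasDerivAt_id t).const_mul w).add
    (((hasDerivAt_id t).const_mul (c ^ 2)).div_const (2 * w))).sub
    (((hasDerivAt_mul_add (2 * w) (2 * α) t).sin.sub_const (sin (2 * α))).const_mul
      (c ^ 2 / (4 * w ^ 2)))).sub
    (((hasDerivAt_mul_add w α t).cos.const_sub (cos α)).const_mul (c ^ 2 * sin α / w ^ 2))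
  refine h.congr_deriv ?_
  rw [show 2 * w * t + 2 * α = 2 * (w * t + α) by ring, cos_two_mul, cos_sq']
  field_simp
  ring

end NilHelix

open NilHelix in
theorem nil_helix_geodesic_unit_speed_general (θ α c w : ℝ)
    (hw : w = sin θ) (hw0 : w ≠ 0) (hc : c = cos θ)
    (x y z : ℝ → ℝ)
    (hx : ∀ t, x t = 2 * c / w * sin (w * t / 2) * cos (w * t / 2 + α))
    (hy : ∀ t, y t = 2 * c / w * sin (w * t / 2) * sin (w * t / 2 + α))
    (hz : ∀ t, z t = w * t + c ^ 2 * t / (2 * w)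
        - c ^ 2 / (4 * w ^ 2) * (sin (2 * w * t + 2 * α) - sin (2 * α))
        - c ^ 2 * sin α / w ^ 2 * (cos α - cos (w * t + α))) :
    ∀ t : ℝ,
      deriv x t ^ 2 + (1 + x t ^ 2) * deriv y t ^ 2 -
          2 * x t * deriv y t * deriv z t + deriv z t ^ 2 = 1 := by
  have hcw : c ^ 2 + w ^ 2 = 1 := by
    rw [hc, hw]
    exact cos_sq_add_sin_sq θ
  obtain rfl : x = fun t ↦ c / w * (sin (w * t + α) - sin α) := funext fun t ↦ by
    rw [hx, ← two_mul_sin_mul_cos_eq α]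
    ring
  obtain rfl : y = fun t ↦ c / w * (cos α - cos (w * t + α)) := funext fun t ↦ by
    rw [hy, ← two_mul_sin_mul_sin_eq α]
    ring
  obtain rfl := funext hz
  intro t
  rw [nil_form_eq_add_sq, (hasDerivAt_circle_fst α hw0 t).deriv,
    (hasDerivAt_circle_snd α hw0 t).deriv, (hasDerivAt_height α hw0 t).deriv]
  linear_combination c ^ 2 * cos_sq_add_sin_sq (w * t + α) + hcw

/-- **The helix-like Nil geodesic has unit speed:** for `θ ∈ (−π/2, π/2)` with
`w = sin θ ≠ 0`, `c = cos θ`, `α ∈ ℝ` and the helix-like geodesic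
`x(t) = (2c/w)·sin(wt/2)·cos(wt/2 + α)`, `y(t) = (2c/w)·sin(wt/2)·sin(wt/2 + α)`,
`z(t) = wt + c²t/(2w) − (c²/(4w²))·(sin(2wt + 2α) − sin 2α) − (c²·sin α/w²)·(cos α − cos(wt + α))`,
one has `x'(t)² + (1 + x(t)²)·y'(t)² − 2·x(t)·y'(t)·z'(t) + z'(t)² = 1` for every `t`. -/
theorem nil_helix_geodesic_unit_speed (θ α c w : ℝ)
    (hθ : θ ∈ Set.Ioo (-(π / 2)) (π / 2))
    (hw : w = sin θ) (hw0 : w ≠ 0) (hc : c = cos θ)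
    (x y z : ℝ → ℝ)
    (hx : ∀ t, x t = 2 * c / w * sin (w * t / 2) * cos (w * t / 2 + α))
    (hy : ∀ t, y t = 2 * c / w * sin (w * t / 2) * sin (w * t / 2 + α))
    (hz : ∀ t, z t = w * t + c ^ 2 * t / (2 * w)
        - c ^ 2 / (4 * w ^ 2) * (sin (2 * w * t + 2 * α) - sin (2 * α))
        - c ^ 2 * sin α / w ^ 2 * (cos α - cos (w * t + α))) :
    ∀ t : ℝ,
      deriv x t ^ 2 + (1 + x t ^ 2) * deriv y t ^ 2 -
          2 * x t * deriv y t * deriv z t + deriv z t ^ 2 = 1 :=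
  nil_helix_geodesic_unit_speed_general θ α c w hw hw0 hc x y z hx hy hz
end

section
/- The fibre projection of a helix-like Nil geodesic is injective over one period of the circle: for real numbers c > 0, w ≠ 0, α ∈ ℝ, the map t ↦ ( (2c/w)·sin(wt/2)·cos(wt/2 + α), (2c/w)·sin(wt/2)·sin(wt/2 + α) ) is injective on the interval [0, 2π/|w|). Consequently, on such a segment there is a one-to-one correspondence between the geodesic segment and its fibre-projected circular arc. -/
/-!
Doubling the angle turns the projected helix into a circle: by the product-to-sum formulas,
`2 sin u cos (u + α) = sin (2u + α) - sin α` and `2 sin u sin (u + α) = cos α - cos (2u + α)`.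
So two parameters with the same image have the same point `(cos, sin)` at the doubled angles
`2u + α`, `2v + α`, which therefore differ by a multiple of `2π`; over one period `|u - v| < π`,
so they coincide.
-/

open Real

theorem two_mul_sin_mul_cos_add (u α : ℝ) :
    2 * (sin u * cos (u + α)) = sin (2 * u + α) - sin α := by
  rw [← mul_assoc, two_mul_sin_mul_cos, sub_add_cancel_left, sin_neg]
  ring_nf

theorem two_mul_sin_mul_sin_add (u α : ℝ) :
    2 * (sin u * sin (u + α)) = cos α - cos (2 * u + α) := by
  rw [← mul_assoc, two_mul_sin_mul_sin, sub_add_cancel_left, cos_neg]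
  ring_nf

theorem eq_of_cos_eq_of_sin_eq_of_abs_sub_lt {x y : ℝ} (hcos : cos x = cos y)
    (hsin : sin x = sin y) (hxy : |x - y| < 2 * π) : x = y := by
  have hcos_sub : cos (x - y) = 1 := by
    rw [cos_sub, hcos, hsin, ← sq, ← sq, cos_sq_add_sin_sq]
  obtain ⟨hlow, hhigh⟩ := abs_lt.mp hxy
  exact sub_eq_zero.mp ((cos_eq_one_iff_of_lt_of_lt hlow hhigh).mp hcos_sub)

theorem eq_of_sin_mul_cos_add_eq_of_sin_mul_sin_add_eq {u v α : ℝ} (huv : |u - v| < π)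
    (hcos : sin u * cos (u + α) = sin v * cos (v + α))
    (hsin : sin u * sin (u + α) = sin v * sin (v + α)) : u = v := by
  have hcos' : cos (2 * u + α) = cos (2 * v + α) := by
    linarith [two_mul_sin_mul_sin_add u α, two_mul_sin_mul_sin_add v α]
  have hsin' : sin (2 * u + α) = sin (2 * v + α) := by
    linarith [two_mul_sin_mul_cos_add u α, two_mul_sin_mul_cos_add v α]
  have hdiff : |(2 * u + α) - (2 * v + α)| < 2 * π := by
    rw [show (2 * u + α) - (2 * v + α) = 2 * (u - v) by ring, abs_mul, abs_two]
    linarith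
  linarith [eq_of_cos_eq_of_sin_eq_of_abs_sub_lt hcos' hsin' hdiff]

/-- **Injectivity of the fibre projection of a helix-like Nil geodesic over one period:**
for `c > 0`, `w ≠ 0`, `α ∈ ℝ`, the map
`t ↦ ((2c/w)·sin(wt/2)·cos(wt/2 + α), (2c/w)·sin(wt/2)·sin(wt/2 + α))`
is injective on the interval `[0, 2π/|w|)`; hence on such a segment there is a one-to-one
correspondence between the geodesic segment and its fibre-projected circular arc. -/
theorem nil_helix_projection_injective (c w α : ℝ) (hc : 0 < c) (hw : w ≠ 0) :
    Set.InjOn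
      (fun t : ℝ =>
        ((2 * c / w * sin (w * t / 2) * cos (w * t / 2 + α),
          2 * c / w * sin (w * t / 2) * sin (w * t / 2 + α)) : ℝ × ℝ))
      (Set.Ico 0 (2 * π / |w|)) := by
  intro s hs t ht hst
  obtain ⟨hx, hy⟩ := Prod.ext_iff.mp hst
  have hk : 2 * c / w ≠ 0 := div_ne_zero (by positivity) hw
  have hst_lt : |s - t| < 2 * π / |w| :=
    abs_sub_lt_iff.mpr ⟨by linarith [hs.2, ht.1], by linarith [hs.1, ht.2]⟩
  have hhalf : |w * s / 2 - w * t / 2| < π := by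
    rw [show w * s / 2 - w * t / 2 = w * (s - t) / 2 by ring, abs_div, abs_mul, abs_two]
    have := (lt_div_iff₀' (abs_pos.mpr hw)).mp hst_lt
    linarith
  have hws := eq_of_sin_mul_cos_add_eq_of_sin_mul_sin_add_eq hhalf
    (mul_left_cancel₀ hk (by simpa only [mul_assoc] using hx))
    (mul_left_cancel₀ hk (by simpa only [mul_assoc] using hy))
  exact mul_left_cancel₀ hw (by linarith)
end

section
/- For radius R > 2π the Nil geodesic sphere self-intersects: let R > 2π, set w = 2π/R ∈ (0,1) and c = √(1 − w²), and for α ∈ ℝ define the geodesic endpoint E(α) = (x(R), y(R), z(R)) with x(t) = (2c/w)·sin(wt/2)·cos(wt/2 + α), y(t) = (2c/w)·sin(wt/2)·sin(wt/2 + α), z(t) = wt + c²t/(2w) − (c²/(4w²))·(sin(2wt + 2α) − sin 2α) − (c²·sin α/w²)·(cos α − cos(wt + α)). Then for every α one has x(R) = 0, y(R) = 0 and z(R) = 2π + c²·R/(2w); in particular E(α₁) = E(α₂) for all α₁, α₂, so the map sending the direction parameters (θ, α) (with sin θ = w) to the endpoint of the unit-speed geodesic of length R is not injective. -/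
open Real

/-! After time `t = 2π/w` the horizontal projection of a Nil geodesic has run once around its
circle back to the origin, and every trigonometric term of the height has returned to its initial
value; so all geodesics with `sin θ = w` meet at the same point of the `z`-axis, whatever `α`. -/

/-- The point at time `t` of the Nil geodesic from the origin with parameters
`c = cos θ`, `w = sin θ` and `α`. -/
noncomputable def nilGeodesic (c w α t : ℝ) : ℝ × ℝ × ℝ :=
  (2 * c / w * sin (w * t / 2) * cos (w * t / 2 + α),
   2 * c / w * sin (w * t / 2) * sin (w * t / 2 + α),
   w * t + c ^ 2 * t / (2 * w)
     - c ^ 2 / (4 * w ^ 2) * (sin (2 * w * t + 2 * α) - sin (2 * α))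
     - c ^ 2 * sin α / w ^ 2 * (cos α - cos (w * t + α)))

theorem nilGeodesic_of_mul_eq_two_pi {c w t : ℝ} (α : ℝ) (h : w * t = 2 * π) :
    nilGeodesic c w α t = (0, 0, 2 * π + c ^ 2 * t / (2 * w)) := by
  have h2 : 2 * w * t + 2 * α = 2 * α + 2 * π + 2 * π := by linear_combination 2 * h
  have h1 : w * t + α = α + 2 * π := by linear_combination h
  rw [nilGeodesic, h2, h1, h, mul_div_cancel_left₀ π two_ne_zero, sin_pi, sin_add_two_pi,
    sin_add_two_pi, cos_add_two_pi]
  simp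

theorem nil_sphere_self_intersects_of_radius_gt_two_pi_general (R w c : ℝ)
    (hR : 2 * π < R) (hw : w = 2 * π / R)
    (E : ℝ → ℝ × ℝ × ℝ)
    (hE : ∀ α : ℝ, E α =
      (2 * c / w * sin (w * R / 2) * cos (w * R / 2 + α),
       2 * c / w * sin (w * R / 2) * sin (w * R / 2 + α),
       w * R + c ^ 2 * R / (2 * w)
         - c ^ 2 / (4 * w ^ 2) * (sin (2 * w * R + 2 * α) - sin (2 * α))
         - c ^ 2 * sin α / w ^ 2 * (cos α - cos (w * R + α)))) :
    (∀ α : ℝ, E α = (0, 0, 2 * π + c ^ 2 * R / (2 * w))) ∧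
      ∀ α₁ α₂ : ℝ, E α₁ = E α₂ := by
  have hwR : w * R = 2 * π := by
    rw [hw, div_mul_cancel₀]
    exact (two_pi_pos.trans hR).ne'
  have hE_const (α : ℝ) : E α = (0, 0, 2 * π + c ^ 2 * R / (2 * w)) :=
    (hE α).trans (nilGeodesic_of_mul_eq_two_pi α hwR)
  exact ⟨hE_const, fun α₁ α₂ => (hE_const α₁).trans (hE_const α₂).symm⟩

/-- **For radius `R > 2π` the Nil geodesic sphere self-intersects:** with `w = 2π/R`,
`c = √(1 − w²)`, and `E(α)` the endpoint at parameter `R` of the helix-like geodesic with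
direction parameter `α`, every `E(α)` equals `(0, 0, 2π + c²·R/(2w))`; in particular
`E(α₁) = E(α₂)` for all `α₁, α₂`, so the endpoint map is not injective. -/
theorem nil_sphere_self_intersects_of_radius_gt_two_pi (R w c : ℝ)
    (hR : 2 * π < R) (hw : w = 2 * π / R) (hc : c = Real.sqrt (1 - w ^ 2))
    (E : ℝ → ℝ × ℝ × ℝ)
    (hE : ∀ α : ℝ, E α =
      (2 * c / w * sin (w * R / 2) * cos (w * R / 2 + α),
       2 * c / w * sin (w * R / 2) * sin (w * R / 2 + α),
       w * R + c ^ 2 * R / (2 * w)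
         - c ^ 2 / (4 * w ^ 2) * (sin (2 * w * R + 2 * α) - sin (2 * α))
         - c ^ 2 * sin α / w ^ 2 * (cos α - cos (w * R + α)))) :
    (∀ α : ℝ, E α = (0, 0, 2 * π + c ^ 2 * R / (2 * w))) ∧
      ∀ α₁ α₂ : ℝ, E α₁ = E α₂ :=
  nil_sphere_self_intersects_of_radius_gt_two_pi_general R w c hR hw E hE
end

section
/- For 0 < R ≤ 2π the Nil geodesic endpoint map is injective: let 0 < R ≤ 2π and define E(θ, α) for θ ∈ (−π/2, π/2) and α ∈ [−π, π) as follows. If θ ≠ 0, with c = cos θ and w = sin θ, set E(θ, α) = (x(R), y(R), z(R)) where x(t) = (2c/w)·sin(wt/2)·cos(wt/2 + α), y(t) = (2c/w)·sin(wt/2)·sin(wt/2 + α), z(t) = wt + c²t/(2w) − (c²/(4w²))·(sin(2wt + 2α) − sin 2α) − (c²·sin α/w²)·(cos α − cos(wt + α)); if θ = 0, set E(0, α) = (R·cos α, R·sin α, (R²/2)·cos α·sin α). Then E is injective on (−π/2, π/2) × [−π, π): if E(θ₁, α₁) = E(θ₂, α₂) then θ₁ = θ₂ and α₁ = α₂.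 Hence the geodesic sphere of radius R exists (has no self-intersection) for every R ∈ (0, 2π]. -/
/-!
Write the endpoint as `x + iy = r e^{i(φ + α)}` with `φ = R sin θ / 2`, and put `ζ = z - xy/2`.
Both `r = R cos θ · sinc (R sin θ / 2)` and `ζ` depend on `θ` alone. The radius `r` is even in
`θ` and strictly decreasing in `|θ|`, because `sinc` decreases on `[0, π]` and `R sin θ / 2 < π`
when `R ≤ 2π`; the height `ζ` is odd in `θ` and has the sign of `θ`. Hence `(r, ζ)` determines
`θ`, and then the polar angle `φ + α` determines `α ∈ [-π, π)`.
-/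

open Real Set

namespace Real

lemma sinc_strictAntiOn : StrictAntiOn sinc (Icc 0 π) := by
  intro a ha b hb hab
  have hb0 : 0 < b := ha.1.trans_lt hab
  rw [sinc_of_ne_zero hb0.ne']
  rcases ha.1.eq_or_lt with rfl | ha0
  · rw [sinc_zero, div_lt_one hb0]
    exact sin_lt hb0
  · have h := strictConcaveOn_sin_Icc.secant_strict_mono (left_mem_Icc.2 pi_pos.le) ha hb
      ha0.ne' hb0.ne' hab
    simpa [sinc_of_ne_zero ha0.ne'] using h

lemma sinc_abs (x : ℝ) : sinc |x| = sinc x := by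
  rcases abs_choice x with h | h <;> rw [h]
  exact sinc_neg x

lemma sinc_pos {x : ℝ} (hx : |x| < π) : 0 < sinc x := by
  rw [← sinc_abs]
  rcases (abs_nonneg x).eq_or_lt with h | h
  · simp [← h]
  · rw [sinc_of_ne_zero h.ne']
    exact div_pos (sin_pos_of_pos_of_lt_pi h hx) h

lemma abs_sin_lt_one_of_mem_Ioo {θ : ℝ} (hθ : θ ∈ Ioo (-(π / 2)) (π / 2)) : |sin θ| < 1 := by
  rw [← sq_lt_one_iff_abs_lt_one]
  have := cos_pos_of_mem_Ioo hθ
  nlinarith [sin_sq_add_cos_sq θ]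

lemma Angle.injOn_coe_Ico : InjOn ((↑) : ℝ → Angle) (Ico (-π) π) := by
  intro a ha b hb h
  have : Fact (0 < 2 * π) := ⟨two_pi_pos⟩
  have shift : ∀ {x : ℝ}, x ∈ Ico (-π) π → x ∈ Ico (-π) (-π + 2 * π) := fun hx =>
    ⟨hx.1, by linarith [hx.2]⟩
  exact (AddCircle.coe_eq_coe_iff_of_mem_Ico (shift ha) (shift hb)).1 h

end Real

noncomputable def nilCylindrical (r φ ζ : ℝ) : ℝ × ℝ × ℝ :=
  (r * cos φ, r * sin φ, r * cos φ * (r * sin φ) / 2 + ζ)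

lemma nilCylindrical_inj {r₁ r₂ φ₁ φ₂ ζ₁ ζ₂ : ℝ} (hr₁ : 0 < r₁) (hr₂ : 0 < r₂)
    (h : nilCylindrical r₁ φ₁ ζ₁ = nilCylindrical r₂ φ₂ ζ₂) :
    r₁ = r₂ ∧ (φ₁ : Angle) = φ₂ ∧ ζ₁ = ζ₂ := by
  simp only [nilCylindrical, Prod.mk.injEq] at h
  obtain ⟨hx, hy, hz⟩ := h
  have hr : r₁ = r₂ := by
    refine (pow_left_inj₀ hr₁.le hr₂.le two_ne_zero).1 ?_
    linear_combination (r₁ * cos φ₁ + r₂ * cos φ₂) * hx + (r₁ * sin φ₁ + r₂ * sin φ₂) * hy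
      - r₁ ^ 2 * sin_sq_add_cos_sq φ₁ + r₂ ^ 2 * sin_sq_add_cos_sq φ₂
  subst hr
  refine ⟨rfl, Angle.cos_sin_inj (mul_left_cancel₀ hr₁.ne' hx) (mul_left_cancel₀ hr₁.ne' hy), ?_⟩
  rw [hx, hy] at hz
  linarith

noncomputable def nilRadius (R θ : ℝ) : ℝ := R * cos θ * sinc (sin θ * R / 2)

/-- At `θ = 0` the division by `sin θ ^ 2 = 0` gives `0`, which is the correct height there. -/
noncomputable def nilHeight (R θ : ℝ) : ℝ :=
  sin θ * R + cos θ ^ 2 * (sin θ * R - sin (sin θ * R)) / (2 * sin θ ^ 2)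

lemma nilRadius_neg (R θ : ℝ) : nilRadius R (-θ) = nilRadius R θ := by
  simp only [nilRadius, cos_neg, sin_neg, neg_mul, neg_div, sinc_neg]

lemma nilRadius_abs (R θ : ℝ) : nilRadius R |θ| = nilRadius R θ := by
  rcases abs_choice θ with h | h <;> rw [h]
  exact nilRadius_neg R θ

lemma sinc_sin_mul_pos {R θ : ℝ} (hR0 : 0 < R) (hR : R ≤ 2 * π)
    (hθ : θ ∈ Ioo (-(π / 2)) (π / 2)) : 0 < sinc (sin θ * R / 2) := by
  apply sinc_pos
  rw [abs_div, abs_mul, abs_of_pos hR0, abs_two]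
  have := abs_sin_lt_one_of_mem_Ioo hθ
  nlinarith

lemma nilRadius_pos {R θ : ℝ} (hR0 : 0 < R) (hR : R ≤ 2 * π)
    (hθ : θ ∈ Ioo (-(π / 2)) (π / 2)) : 0 < nilRadius R θ :=
  mul_pos (mul_pos hR0 (cos_pos_of_mem_Ioo hθ)) (sinc_sin_mul_pos hR0 hR hθ)

lemma nilRadius_strictAntiOn {R : ℝ} (hR0 : 0 < R) (hR : R ≤ 2 * π) :
    StrictAntiOn (nilRadius R) (Ico 0 (π / 2)) := by
  intro θ₁ h₁ θ₂ h₂ h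
  have hmem : ∀ θ ∈ Ico 0 (π / 2), sin θ * R / 2 ∈ Icc 0 π := fun θ hθ =>
    ⟨by have := sin_nonneg_of_nonneg_of_le_pi hθ.1 (by linarith [hθ.2]); positivity,
      by nlinarith [sin_le_one θ]⟩
  have hcos : cos θ₂ < cos θ₁ := cos_lt_cos_of_nonneg_of_le_pi h₁.1 (by linarith [h₂.2]) h
  have hsinc : sinc (sin θ₂ * R / 2) ≤ sinc (sin θ₁ * R / 2) :=
    sinc_strictAntiOn.antitoneOn (hmem θ₁ h₁) (hmem θ₂ h₂) (by
      have := sin_le_sin_of_le_of_le_pi_div_two (by linarith [h₁.1]) h₂.2.le h.le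
      gcongr)
  have hpos := sinc_sin_mul_pos hR0 hR ⟨by linarith [h₂.1], h₂.2⟩
  have hcos₁ := cos_nonneg_of_mem_Icc (x := θ₁) ⟨by linarith [h₁.1], by linarith [h₁.2]⟩
  unfold nilRadius
  calc R * cos θ₂ * sinc (sin θ₂ * R / 2) < R * cos θ₁ * sinc (sin θ₂ * R / 2) := by gcongr
    _ ≤ R * cos θ₁ * sinc (sin θ₁ * R / 2) := by gcongr

lemma abs_eq_abs_of_nilRadius_eq {R θ₁ θ₂ : ℝ} (hR0 : 0 < R) (hR : R ≤ 2 * π)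
    (h₁ : θ₁ ∈ Ioo (-(π / 2)) (π / 2)) (h₂ : θ₂ ∈ Ioo (-(π / 2)) (π / 2))
    (h : nilRadius R θ₁ = nilRadius R θ₂) : |θ₁| = |θ₂| := by
  have habs : ∀ θ ∈ Ioo (-(π / 2)) (π / 2), |θ| ∈ Ico 0 (π / 2) := fun θ hθ =>
    ⟨abs_nonneg θ, abs_lt.2 hθ⟩
  rw [← nilRadius_abs, ← nilRadius_abs R θ₂] at h
  exact (nilRadius_strictAntiOn hR0 hR).injOn (habs θ₁ h₁) (habs θ₂ h₂) h

lemma nilHeight_neg (R θ : ℝ) : nilHeight R (-θ) = -nilHeight R θ := by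
  simp only [nilHeight, cos_neg, sin_neg, neg_mul, neg_sq]
  ring

lemma nilHeight_pos {R θ : ℝ} (hR0 : 0 < R) (hθ : 0 < sin θ) : 0 < nilHeight R θ := by
  have hwR : 0 < sin θ * R := mul_pos hθ hR0
  have hgap : 0 ≤ sin θ * R - sin (sin θ * R) := sub_nonneg.2 (sin_lt hwR).le
  unfold nilHeight
  positivity

lemma eq_of_abs_eq_of_nilHeight_eq {R θ₁ θ₂ : ℝ} (hR0 : 0 < R) (hθ₂ : θ₂ ∈ Ioo (-π) π)
    (habs : |θ₁| = |θ₂|) (h : nilHeight R θ₁ = nilHeight R θ₂) : θ₁ = θ₂ := by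
  rcases abs_eq_abs.1 habs with h' | rfl
  · exact h'
  have hzero : nilHeight R θ₂ = 0 := by linarith [nilHeight_neg R θ₂]
  rcases lt_trichotomy θ₂ 0 with hneg | rfl | hpos
  · have := nilHeight_pos hR0 (sin_pos_of_pos_of_lt_pi (neg_pos.2 hneg) (by linarith [hθ₂.1]))
    linarith [nilHeight_neg R θ₂]
  · simp
  · linarith [nilHeight_pos hR0 (sin_pos_of_pos_of_lt_pi hpos hθ₂.2)]

noncomputable def nilEndpoint (R θ α : ℝ) : ℝ × ℝ × ℝ :=
  if θ = 0 then (R * cos α, R * sin α, R ^ 2 / 2 * cos α * sin α)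
  else (2 * cos θ / sin θ * sin (sin θ * R / 2) * cos (sin θ * R / 2 + α),
       2 * cos θ / sin θ * sin (sin θ * R / 2) * sin (sin θ * R / 2 + α),
       sin θ * R + cos θ ^ 2 * R / (2 * sin θ)
         - cos θ ^ 2 / (4 * sin θ ^ 2) * (sin (2 * sin θ * R + 2 * α) - sin (2 * α))
         - cos θ ^ 2 * sin α / sin θ ^ 2 * (cos α - cos (sin θ * R + α)))

lemma helix_twistedHeight (R w c α : ℝ) (hw : w ≠ 0) :
    (w * R + c ^ 2 * R / (2 * w) - c ^ 2 / (4 * w ^ 2) * (sin (2 * w * R + 2 * α) - sin (2 * α))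
      - c ^ 2 * sin α / w ^ 2 * (cos α - cos (w * R + α)))
    - 2 * c / w * sin (w * R / 2) * cos (w * R / 2 + α)
      * (2 * c / w * sin (w * R / 2) * sin (w * R / 2 + α)) / 2
    = w * R + c ^ 2 * (w * R - sin (w * R)) / (2 * w ^ 2) := by
  have trig (A a : ℝ) : A / 2 - (sin (2 * A + 2 * a) - sin (2 * a)) / 4
      - sin a * (cos a - cos (A + a)) = (1 - cos A) * sin (A + 2 * a) / 2 + (A - sin A) / 2 := by
    rw [show 2 * A + 2 * a = (A + a) + (A + a) by ring, show A + 2 * a = (A + a) + a by ring,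
      two_mul a, sin_add (A + a) (A + a), sin_add (A + a) a, sin_add a a, sin_add A a, cos_add A a]
    linear_combination (sin a * cos a / 2) * sin_sq_add_cos_sq A - (sin A / 2) * sin_sq_add_cos_sq a
  have half_sq : sin (w * R / 2) ^ 2 = (1 - cos (w * R)) / 2 := by
    rw [sin_sq_eq_half_sub, show 2 * (w * R / 2) = w * R by ring]
    ring
  have double : 2 * sin (w * R / 2 + α) * cos (w * R / 2 + α) = sin (w * R + 2 * α) := by
    rw [← sin_two_mul]
    ring_nf
  have hxy : 2 * c / w * sin (w * R / 2) * cos (w * R / 2 + α)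
      * (2 * c / w * sin (w * R / 2) * sin (w * R / 2 + α))
      = c ^ 2 / w ^ 2 * (1 - cos (w * R)) * sin (w * R + 2 * α) := by
    linear_combination (4 * c ^ 2 / w ^ 2 * cos (w * R / 2 + α) * sin (w * R / 2 + α)) * half_sq
      + (c ^ 2 / w ^ 2 * (1 - cos (w * R))) * double
  rw [hxy, show c ^ 2 * R / (2 * w) = c ^ 2 * (w * R) / (2 * w ^ 2) by field_simp,
    show 2 * w * R + 2 * α = 2 * (w * R) + 2 * α by ring]
  linear_combination (c ^ 2 / w ^ 2) * trig (w * R) α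

lemma nilEndpoint_eq_nilCylindrical {R θ : ℝ} (hR : R ≠ 0) (hθ : θ ∈ Ioo (-π) π) (α : ℝ) :
    nilEndpoint R θ α = nilCylindrical (nilRadius R θ) (sin θ * R / 2 + α) (nilHeight R θ) := by
  by_cases h0 : θ = 0
  · subst h0
    simp [nilEndpoint, nilCylindrical, nilRadius, nilHeight]
    ring
  have hw : sin θ ≠ 0 := mt (sin_eq_zero_iff_of_lt_of_lt hθ.1 hθ.2).1 h0
  have hr : 2 * cos θ / sin θ * sin (sin θ * R / 2) = nilRadius R θ := by
    rw [nilRadius, sinc_of_ne_zero (by positivity)]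
    field_simp
  rw [nilEndpoint, if_neg h0, nilCylindrical, ← hr, nilHeight,
    ← helix_twistedHeight R (sin θ) (cos θ) α hw]
  ring_nf

/-- **For `0 < R ≤ 2π` the Nil geodesic endpoint map is injective:** with
`E(θ, α)` the endpoint at parameter `R` of the unit-speed geodesic from the origin with
direction parameters `θ ∈ (−π/2, π/2)`, `α ∈ [−π, π)` (helix-like when `θ ≠ 0`, with
`c = cos θ`, `w = sin θ`; straight-type when `θ = 0`), if `E(θ₁, α₁) = E(θ₂, α₂)` then
`θ₁ = θ₂` and `α₁ = α₂`. Hence the geodesic sphere of radius `R` has no self-intersection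
for every `R ∈ (0, 2π]`. -/
theorem nil_sphere_endpoint_map_injective (R : ℝ) (hR0 : 0 < R) (hR : R ≤ 2 * π)
    (E : ℝ → ℝ → ℝ × ℝ × ℝ)
    (hE0 : ∀ α : ℝ, E 0 α = (R * cos α, R * sin α, R ^ 2 / 2 * cos α * sin α))
    (hE : ∀ θ α : ℝ, θ ≠ 0 → E θ α =
      (2 * cos θ / sin θ * sin (sin θ * R / 2) * cos (sin θ * R / 2 + α),
       2 * cos θ / sin θ * sin (sin θ * R / 2) * sin (sin θ * R / 2 + α),
       sin θ * R + cos θ ^ 2 * R / (2 * sin θ)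
         - cos θ ^ 2 / (4 * sin θ ^ 2) * (sin (2 * sin θ * R + 2 * α) - sin (2 * α))
         - cos θ ^ 2 * sin α / sin θ ^ 2 * (cos α - cos (sin θ * R + α)))) :
    ∀ θ₁ θ₂ α₁ α₂ : ℝ,
      θ₁ ∈ Set.Ioo (-(π / 2)) (π / 2) → θ₂ ∈ Set.Ioo (-(π / 2)) (π / 2) →
      α₁ ∈ Set.Ico (-π) π → α₂ ∈ Set.Ico (-π) π →
      E θ₁ α₁ = E θ₂ α₂ → θ₁ = θ₂ ∧ α₁ = α₂ := by
  intro θ₁ θ₂ α₁ α₂ h₁ h₂ hα₁ hα₂ heq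
  have hE_eq : E = nilEndpoint R := by
    ext1 θ; ext1 α
    by_cases h0 : θ = 0
    · rw [nilEndpoint, if_pos h0, h0, hE0]
    · rw [nilEndpoint, if_neg h0, hE θ α h0]
  have wide : Ioo (-(π / 2)) (π / 2) ⊆ Ioo (-π) π :=
    Ioo_subset_Ioo (by linarith [pi_pos]) (by linarith [pi_pos])
  rw [hE_eq, nilEndpoint_eq_nilCylindrical hR0.ne' (wide h₁),
    nilEndpoint_eq_nilCylindrical hR0.ne' (wide h₂)] at heq
  obtain ⟨hr, hφ, hζ⟩ :=
    nilCylindrical_inj (nilRadius_pos hR0 hR h₁) (nilRadius_pos hR0 hR h₂) heq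
  obtain rfl : θ₁ = θ₂ :=
    eq_of_abs_eq_of_nilHeight_eq hR0 (wide h₂) (abs_eq_abs_of_nilRadius_eq hR0 hR h₁ h₂ hr) hζ
  rw [Angle.coe_add, Angle.coe_add, add_right_inj] at hφ
  exact ⟨rfl, Angle.injOn_coe_Ico hα₁ hα₂ hφ⟩
end
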